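/- (Correctness of the FARSec solution.) Let V be a finite type of nodes, E ⊆ V × V a set of directed edges, and s : V × V → ℕ a security level function. Let P : V × V → (list of edges) be such that for every pair (a, b) with a ≠ b admitting a valid path from a to b, P(a, b) is a valid simple path from a to b whose bottleneck is maximal among all valid paths from a to b, and P(a, b) = ε (the empty path) when no valid path from a to b exists. For a flow with origin o, destination d (o ≠ d) and minimum security requirement ℓ ∈ ℕ, define the assigned path 𝕊 = P(o, d) if P(o, d) ≠ ε and bottleneck(P(o, d)) ≥ ℓ, and 𝕊 = ε otherwise. Then: (1) if 𝕊 ≠ ε, 𝕊 is a valid simple path from o to d; (2) if 𝕊 ≠ ε, every edge e of 𝕊 satisfies s(e) ≥ ℓ; (3) if 𝕊 = ε, then there does not exist any valid simple path from o to d all of whose edges e satisfy s(e) ≥ ℓ. -/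

import Mathlib

/-- A (nonempty) valid path in the network `(V, E)` from `a` to `b`:
a nonempty list of edges, each belonging to `E`, consecutively connected
(`dst eᵢ = src e_{i+1}`), starting at `a` and ending at `b`. -/
def IsValidPath {V : Type*} (E : Set (V × V)) (a b : V) (p : List (V × V)) : Prop :=
  (∀ e ∈ p, e ∈ E) ∧ List.Chain' (fun e f => e.2 = f.1) p ∧
    p.head?.map Prod.fst = some a ∧ p.getLast?.map Prod.snd = some b

/-- The nodes traversed by a path: the sources of all edges plus the final destination. -/
def pathNodes {V : Type*} (p : List (V × V)) : List V :=
  p.map Prod.fst ++ (p.getLast?.map Prod.snd).toList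

/-- A path is simple if it traverses no node twice. -/
def IsSimplePath {V : Type*} (p : List (V × V)) : Prop :=
  (pathNodes p).Nodup

/-- The bottleneck of a (nonempty) path: the minimum of `s` over its edges. -/
def bottleneck {V : Type*} (s : V × V → ℕ) (p : List (V × V)) : ℕ :=
  WithTop.untopD 0 ((p.map s).minimum)

/-!
Only (3) needs an argument: a valid path all of whose edges have level at least `ℓ` has
bottleneck at least `ℓ`, so `o` and `d` are connected and the widest path `P (o, d)` is
nonempty with bottleneck at least `ℓ`; hence the assigned path is not `ε`.
-/

theorem IsValidPath.ne_nil {V : Type*} {E : Set (V × V)} {a b : V} {p : List (V × V)}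
    (h : IsValidPath E a b p) : p ≠ [] := by
  rintro rfl
  simp [IsValidPath] at h

theorem le_bottleneck_iff {V : Type*} {s : V × V → ℕ} {p : List (V × V)} (hp : p ≠ [])
    {ℓ : ℕ} :
    ℓ ≤ bottleneck s p ↔ ∀ e ∈ p, ℓ ≤ s e := by
  obtain ⟨m, hm⟩ := WithTop.ne_top_iff_exists.1
    (List.minimum_ne_top_of_ne_nil (l := p.map s) (by simpa))
  rw [bottleneck, ← hm, WithTop.untopD_coe, ← WithTop.coe_le_coe, hm]
  refine ⟨fun h e he => WithTop.coe_le_coe.1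
      (h.trans (List.minimum_le_of_mem' (List.mem_map_of_mem he))),
    fun h => List.le_minimum_of_forall_le ?_⟩
  simpa only [List.mem_map, forall_exists_index, and_imp, forall_apply_eq_imp_iff₂,
    WithTop.coe_le_coe] using h

theorem farsec_solution_correct_general {V : Type*}
    (E : Set (V × V)) (s : V × V → ℕ)
    (P : V × V → List (V × V))
    (hP : ∀ a b : V, a ≠ b → (∃ p : List (V × V), IsValidPath E a b p) →
      IsValidPath E a b (P (a, b)) ∧ IsSimplePath (P (a, b)) ∧
        ∀ p : List (V × V), IsValidPath E a b p →
          bottleneck s p ≤ bottleneck s (P (a, b)))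
    (hPempty : ∀ a b : V, ¬(∃ p : List (V × V), IsValidPath E a b p) → P (a, b) = [])
    (o d : V) (hod : o ≠ d) (ℓ : ℕ)
    (S : List (V × V))
    (hS : S = if P (o, d) ≠ [] ∧ ℓ ≤ bottleneck s (P (o, d)) then P (o, d) else []) :
    (S ≠ [] → IsValidPath E o d S ∧ IsSimplePath S) ∧
      (S ≠ [] → ∀ e ∈ S, ℓ ≤ s e) ∧
      (S = [] → ¬∃ p : List (V × V), IsValidPath E o d p ∧ IsSimplePath p ∧
        ∀ e ∈ p, ℓ ≤ s e) := by
  by_cases hassigned : P (o, d) ≠ [] ∧ ℓ ≤ bottleneck s (P (o, d))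
  · obtain ⟨hne, hℓ⟩ := hassigned
    rw [if_pos ⟨hne, hℓ⟩] at hS
    subst hS
    have hconn : ∃ p, IsValidPath E o d p := by_contra fun h => hne (hPempty o d h)
    obtain ⟨hvalid, hsimple, -⟩ := hP o d hod hconn
    exact ⟨fun _ => ⟨hvalid, hsimple⟩, fun _ => (le_bottleneck_iff hne).1 hℓ,
      fun h => absurd h hne⟩
  · rw [if_neg hassigned] at hS
    subst hS
    refine ⟨absurd rfl, absurd rfl, fun _ => ?_⟩
    rintro ⟨p, hp, -, hsecure⟩
    obtain ⟨hvalid, -, hwidest⟩ := hP o d hod ⟨p, hp⟩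
    exact hassigned
      ⟨hvalid.ne_nil, ((le_bottleneck_iff hp.ne_nil).2 hsecure).trans (hwidest p hp)⟩

/-- Correctness of the FARSec solution: given a widest-paths table `P` (a valid simple
maximal-bottleneck path for every connected pair, and `ε` otherwise), the path assigned
to a flow `(o, d, ℓ)` — namely `P (o, d)` if it is nonempty and its bottleneck is at
least `ℓ`, and `ε` otherwise — (1) is a valid simple path from `o` to `d` if nonempty,
(2) respects the minimal security constraint `ℓ` if nonempty, and (3) if empty, then no
valid simple path from `o` to `d` respecting `ℓ` exists. -/
theorem farsec_solution_correct {V : Type*} [Fintype V] [DecidableEq V]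
    (E : Set (V × V)) (s : V × V → ℕ)
    (P : V × V → List (V × V))
    (hP : ∀ a b : V, a ≠ b → (∃ p : List (V × V), IsValidPath E a b p) →
      IsValidPath E a b (P (a, b)) ∧ IsSimplePath (P (a, b)) ∧
        ∀ p : List (V × V), IsValidPath E a b p →
          bottleneck s p ≤ bottleneck s (P (a, b)))
    (hPempty : ∀ a b : V, ¬(∃ p : List (V × V), IsValidPath E a b p) → P (a, b) = [])
    (o d : V) (hod : o ≠ d) (ℓ : ℕ)
    (S : List (V × V))
    (hS : S = if P (o, d) ≠ [] ∧ ℓ ≤ bottleneck s (P (o, d)) then P (o, d) else []) :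
    (S ≠ [] → IsValidPath E o d S ∧ IsSimplePath S) ∧
      (S ≠ [] → ∀ e ∈ S, ℓ ≤ s e) ∧
      (S = [] → ¬∃ p : List (V × V), IsValidPath E o d p ∧ IsSimplePath p ∧
        ∀ e ∈ p, ℓ ≤ s e) :=
  farsec_solution_correct_general E s P hP hPempty o d hod ℓ S hS
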